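/- For every integer k, let u_k and v_k denote the images of the column vectors (3,5) and (1,0) under S^k. Then M(v_k) · M(u_k) = F. In particular (k = 0), M(1,0) · M(3,5) = F, i.e. [[1,1],[0,1]] · [[−14,9],[−25,16]] = [[−39,25],[−25,16]]. -/

import Mathlib

/-!
`M(w)` is the transvection `x ↦ x + ω(w, x) w`, with `ω(w, x) = det [w x]` the standard
symplectic form on `ℤ²`. A matrix `A` of determinant one preserves `ω`, so
`M(A w) = A M(w) A⁻¹`. Hence conjugating the identity `M(1,0) M(3,5) = F` by `S^k` gives
`M(v_k) M(u_k) = S^k F S^(-k)`, which is `F` because `S` commutes with `F`.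
-/

open Matrix

/-- The Dehn twist matrix of a simple closed curve of class `α·a + β·b` on the torus. -/
def DehnTwistMatrix (α β : ℤ) : Matrix (Fin 2) (Fin 2) ℤ :=
  !![1 - α * β, α ^ 2; -β ^ 2, 1 + α * β]

/-- The Dehn twist matrix of a vector `w = (α, β) ∈ ℤ²`. -/
def DehnTwistMatrixVec (w : Fin 2 → ℤ) : Matrix (Fin 2) (Fin 2) ℤ :=
  DehnTwistMatrix (w 0) (w 1)

/-- The monodromy matrix `F`. -/
def Fmat : Matrix (Fin 2) (Fin 2) ℤ := !![-39, 25; -25, 16]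

/-- The matrix `S = [[-3, 5], [-5, 8]]` of determinant 1. -/
def Smat : Matrix (Fin 2) (Fin 2) ℤ := !![-3, 5; -5, 8]

theorem Matrix.det_zpow_of_det_eq_one {n R : Type*} [Fintype n] [DecidableEq n] [CommRing R]
    {A : Matrix n n R} (hA : A.det = 1) (k : ℤ) : (A ^ k).det = 1 := by
  cases k with
  | ofNat m => rw [Int.ofNat_eq_natCast, zpow_natCast, det_pow, hA, one_pow]
  | negSucc m => rw [zpow_negSucc, det_nonsing_inv, det_pow, hA, one_pow, Ring.inverse_one]

theorem dehnTwistMatrixVec_mulVec_mul {A : Matrix (Fin 2) (Fin 2) ℤ} (hA : A.det = 1)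
    (w : Fin 2 → ℤ) : DehnTwistMatrixVec (A *ᵥ w) * A = A * DehnTwistMatrixVec w := by
  rw [det_fin_two] at hA
  ext i j
  fin_cases i <;> fin_cases j <;>
    simp only [DehnTwistMatrixVec, DehnTwistMatrix, mulVec, dotProduct, Fin.isValue,
      Fin.sum_univ_two, Fin.zero_eta, Fin.mk_one, mul_apply, of_apply, cons_val',
      cons_val_fin_one, cons_val_zero, cons_val_one, neg_mul, mul_neg]
  · linear_combination (-(A 0 1 * w 1 ^ 2) - A 0 0 * w 0 * w 1) * hA
  · linear_combination (A 0 1 * w 0 * w 1 + A 0 0 * w 0 ^ 2) * hA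
  · linear_combination (-(A 1 1 * w 1 ^ 2) - A 1 0 * w 0 * w 1) * hA
  · linear_combination (A 1 1 * w 0 * w 1 + A 1 0 * w 0 ^ 2) * hA

theorem dehnTwistMatrixVec_mulVec_mul_dehnTwistMatrixVec_mulVec
    {A : Matrix (Fin 2) (Fin 2) ℤ} (hA : A.det = 1) (v w : Fin 2 → ℤ) :
    DehnTwistMatrixVec (A *ᵥ v) * DehnTwistMatrixVec (A *ᵥ w) * A =
      A * (DehnTwistMatrixVec v * DehnTwistMatrixVec w) := by
  rw [Matrix.mul_assoc, dehnTwistMatrixVec_mulVec_mul hA, ← Matrix.mul_assoc,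
    dehnTwistMatrixVec_mulVec_mul hA, Matrix.mul_assoc]

theorem Smat_det : Smat.det = 1 := by
  simp [Smat, det_fin_two_of]

theorem Smat_commute_Fmat : Commute Smat Fmat := by
  simp [Commute, SemiconjBy, Smat, Fmat]

theorem dehnTwistMatrix_one_zero_mul_dehnTwistMatrix_three_five :
    DehnTwistMatrix 1 0 * DehnTwistMatrix 3 5 = Fmat := by
  simp [DehnTwistMatrix, Fmat]

theorem stmt_6 :
    (∀ k : ℤ,
      DehnTwistMatrixVec ((Smat ^ k) *ᵥ ![1, 0]) *
        DehnTwistMatrixVec ((Smat ^ k) *ᵥ ![3, 5]) = Fmat) ∧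
    DehnTwistMatrix 1 0 * DehnTwistMatrix 3 5 = Fmat ∧
    !![1, 1; 0, 1] * !![-14, 9; -25, 16] = !![(-39 : ℤ), 25; -25, 16] := by
  refine ⟨fun k => ?_, dehnTwistMatrix_one_zero_mul_dehnTwistMatrix_three_five, by decide⟩
  have hdet : (Smat ^ k).det = 1 := det_zpow_of_det_eq_one Smat_det k
  have hunit : IsUnit (Smat ^ k) := (isUnit_iff_isUnit_det _).2 (hdet ▸ isUnit_one)
  apply hunit.mul_right_cancel
  calc DehnTwistMatrixVec (Smat ^ k *ᵥ ![1, 0]) * DehnTwistMatrixVec (Smat ^ k *ᵥ ![3, 5]) *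
        Smat ^ k = Smat ^ k * (DehnTwistMatrix 1 0 * DehnTwistMatrix 3 5) :=
        dehnTwistMatrixVec_mulVec_mul_dehnTwistMatrixVec_mulVec hdet _ _
    _ = Smat ^ k * Fmat := by rw [dehnTwistMatrix_one_zero_mul_dehnTwistMatrix_three_five]
    _ = Fmat * Smat ^ k := (Matrix.Commute.zpow_left Smat_commute_Fmat k).eq
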